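/- Let β ∈ (1,2], define f_β(α) = H(α) + (β/2)·(2α−1)² for α ∈ (0,1), and let q⁺_β ∈ (1/2,1) be the unique zero in (1/2,1) of f_β'(α) = ln((1−α)/α) + 2β(2α−1). Then there exist constants C > 0 and δ₀ ∈ (0,1/2), depending only on β, such that for every δ ∈ (0, δ₀] and all α, α' ∈ [1/2, 1) with |α' − q⁺_β| ≥ δ and |α − q⁺_β| ≤ δ/2, one has f_β(α') − f_β(α) ≤ −C·δ². -/

import Mathlib

/-- The binary entropy function `H(α) = -α ln α - (1-α) ln(1-α)`. -/
noncomputable def binEnt (α : ℝ) : ℝ := -α * Real.log α - (1 - α) * Real.log (1 - α)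

/-- The function `f_β(α) = H(α) + (β/2)(2α-1)²`. -/
noncomputable def fbeta (β α : ℝ) : ℝ := binEnt α + β / 2 * (2 * α - 1) ^ 2

/-!
`f_β'' = 4β - 1/(α(1-α))` is strictly decreasing on `[1/2, 1)`. As `f_β'` vanishes at `1/2` and
at `q⁺`, Rolle's theorem gives a zero of `f_β''` in between, so `μ := -f_β''(q⁺) > 0`. On a small
window `[q⁺ - δ₀, q⁺ + δ₀]` we have `-3μ/2 ≤ f_β'' ≤ -μ/2`, and by monotonicity `f_β'' ≤ -μ/2` on
all of `[q⁺ - δ₀, 1)`. Second-order Taylor bounds around the critical point `q⁺` then give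
`f_β(α') ≤ f_β(q⁺) - μδ²/4` and `f_β(α) ≥ f_β(q⁺) - 3μδ²/16`. Points `α' < q⁺ - δ₀` are handled
by monotonicity of `f_β` on `[1/2, q⁺]`, where `f_β' ≥ 0` because `f_β'` is concave.
-/
open Set

lemma ConcaveOn.le_of_hasDerivAt_eq_zero {S : Set ℝ} {h : ℝ → ℝ} {q x : ℝ}
    (hh : ConcaveOn ℝ S h) (hq : q ∈ S) (hx : x ∈ S) (hd : HasDerivAt h 0 q) : h x ≤ h q := by
  rcases lt_trichotomy x q with hxq | rfl | hqx
  · have := hh.le_slope_of_hasDerivAt hx hq hxq hd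
    rw [slope_def_field, le_div_iff₀ (sub_pos.2 hxq), zero_mul] at this
    linarith
  · exact le_rfl
  · have := hh.slope_le_of_hasDerivAt hq hx hqx hd
    rw [slope_def_field, div_le_iff₀ (sub_pos.2 hqx), zero_mul] at this
    linarith

section Taylor

variable {D : Set ℝ} {f f' f'' : ℝ → ℝ} {c q x : ℝ}

lemma le_add_sq_of_deriv2_le (hD : Convex ℝ D) (hf : ∀ y ∈ D, HasDerivAt f (f' y) y)
    (hf' : ∀ y ∈ D, HasDerivAt f' (f'' y) y) (hf'' : ∀ y ∈ D, f'' y ≤ c) (hq : q ∈ D)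
    (hx : x ∈ D) : f x ≤ f q + f' q * (x - q) + c / 2 * (x - q) ^ 2 := by
  set h : ℝ → ℝ := fun y ↦ f y - f' q * (y - q) - c / 2 * (y - q) ^ 2 with h_def
  have hh : ∀ y ∈ D, HasDerivAt h (f' y - f' q - c * (y - q)) y := fun y hy ↦ by
    refine (((hf y hy).fun_sub (((hasDerivAt_id' y).sub_const q).const_mul (f' q))).fun_sub
      ((((hasDerivAt_id' y).sub_const q).fun_pow 2).const_mul (c / 2))).congr_deriv ?_
    norm_num
    ring
  have hh' : ∀ y ∈ D, HasDerivAt (fun y ↦ f' y - f' q - c * (y - q)) (f'' y - c) y :=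
    fun y hy ↦ by
      simpa using ((hf' y hy).sub_const (f' q)).fun_sub
        (((hasDerivAt_id' y).sub_const q).const_mul c)
  have hconc : ConcaveOn ℝ D h := concaveOn_of_hasDerivWithinAt2_nonpos hD
    (fun y hy ↦ (hh y hy).continuousAt.continuousWithinAt)
    (fun y hy ↦ (hh y (interior_subset hy)).hasDerivWithinAt)
    (fun y hy ↦ (hh' y (interior_subset hy)).hasDerivWithinAt)
    (fun y hy ↦ sub_nonpos.2 (hf'' y (interior_subset hy)))
  have := hconc.le_of_hasDerivAt_eq_zero hq hx (by simpa using hh q hq)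
  simp only [h_def, sub_self, mul_zero, sub_zero, zero_pow two_ne_zero] at this
  linarith

lemma add_sq_le_of_le_deriv2 (hD : Convex ℝ D) (hf : ∀ y ∈ D, HasDerivAt f (f' y) y)
    (hf' : ∀ y ∈ D, HasDerivAt f' (f'' y) y) (hf'' : ∀ y ∈ D, c ≤ f'' y) (hq : q ∈ D)
    (hx : x ∈ D) : f q + f' q * (x - q) + c / 2 * (x - q) ^ 2 ≤ f x := by
  have := le_add_sq_of_deriv2_le (f := -f) (f' := -f') (f'' := -f'') (c := -c) hD
    (fun y hy ↦ (hf y hy).neg) (fun y hy ↦ (hf' y hy).neg) (fun y hy ↦ neg_le_neg (hf'' y hy))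
    hq hx
  simp only [Pi.neg_apply] at this
  linarith

end Taylor

lemma concaveOn_of_hasDerivAt_of_antitoneOn {D : Set ℝ} (hD : Convex ℝ D) {g g' : ℝ → ℝ}
    (hg : ∀ x ∈ D, HasDerivAt g (g' x) x) (hg' : AntitoneOn g' D) : ConcaveOn ℝ D g :=
  AntitoneOn.concaveOn_of_deriv hD (fun x hx ↦ (hg x hx).continuousAt.continuousWithinAt)
    (fun x hx ↦ (hg x (interior_subset hx)).differentiableAt.differentiableWithinAt)
    fun x hx y hy hxy ↦ by
      rw [(hg x (interior_subset hx)).deriv, (hg y (interior_subset hy)).deriv]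
      exact hg' (interior_subset hx) (interior_subset hy) hxy

noncomputable def fbetaDeriv (β α : ℝ) : ℝ := Real.log (1 - α) - Real.log α + 2 * β * (2 * α - 1)

noncomputable def fbetaDeriv2 (β α : ℝ) : ℝ := 4 * β - 1 / (α * (1 - α))

lemma binEnt_eq_binEntropy : binEnt = Real.binEntropy := by
  ext α
  simp only [binEnt, Real.binEntropy, Real.log_inv]
  ring

section fbeta

variable {β α q : ℝ}

lemma hasDerivAt_fbeta (h0 : 0 < α) (h1 : α < 1) :
    HasDerivAt (fbeta β) (fbetaDeriv β α) α := by
  have hH := Real.hasDerivAt_binEntropy h0.ne' h1.ne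
  rw [← binEnt_eq_binEntropy] at hH
  refine (hH.fun_add ((((hasDerivAt_id' α).const_mul 2).sub_const 1).fun_pow 2
    |>.const_mul (β / 2))).congr_deriv ?_
  norm_num [fbetaDeriv]
  ring

lemma hasDerivAt_fbetaDeriv (h0 : 0 < α) (h1 : α < 1) :
    HasDerivAt (fbetaDeriv β) (fbetaDeriv2 β α) α := by
  have hlog₁ := ((hasDerivAt_id' α).const_sub 1).log (by linarith)
  have hlin := (((hasDerivAt_id' α).const_mul 2).sub_const 1).const_mul (2 * β)
  refine ((hlog₁.fun_sub (Real.hasDerivAt_log h0.ne')).fun_add hlin).congr_deriv ?_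
  have : 1 - α ≠ 0 := by linarith
  rw [fbetaDeriv2]
  field_simp
  ring

lemma fbetaDeriv_half : fbetaDeriv β (1 / 2) = 0 := by norm_num [fbetaDeriv]

lemma continuousAt_fbetaDeriv2 (h0 : 0 < α) (h1 : α < 1) : ContinuousAt (fbetaDeriv2 β) α :=
  continuousAt_const.sub <| continuousAt_const.div
    (continuousAt_id.mul (continuousAt_const.sub continuousAt_id))
    (mul_pos h0 (sub_pos.2 h1)).ne'

lemma fbetaDeriv2_strictAntiOn : StrictAntiOn (fbetaDeriv2 β) (Ico (1 / 2) 1) := by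
  intro x hx y hy hxy
  have hy0 : 0 < y * (1 - y) := mul_pos (by linarith [hy.1]) (by linarith [hy.2])
  have := one_div_lt_one_div_of_lt hy0 (by nlinarith [hx.1] : y * (1 - y) < x * (1 - x))
  simp only [fbetaDeriv2]
  linarith

lemma fbetaDeriv2_neg_of_fbetaDeriv_eq_zero (hq : q ∈ Ioo (1 / 2 : ℝ) 1)
    (hq0 : fbetaDeriv β q = 0) : fbetaDeriv2 β q < 0 := by
  obtain ⟨c, hc, hc0⟩ := exists_hasDerivAt_eq_zero hq.1
    (fun x hx ↦ (hasDerivAt_fbetaDeriv (β := β) (by linarith [hx.1])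
      (by linarith [hx.2, hq.2])).continuousAt.continuousWithinAt)
    (fbetaDeriv_half.trans hq0.symm)
    fun x hx ↦ hasDerivAt_fbetaDeriv (by linarith [hx.1]) (by linarith [hx.2, hq.2])
  exact hc0 ▸ fbetaDeriv2_strictAntiOn ⟨hc.1.le, hc.2.trans hq.2⟩ ⟨hq.1.le, hq.2⟩ hc.2

lemma fbeta_monotoneOn (hq : q < 1) (hq0 : fbetaDeriv β q = 0) :
    MonotoneOn (fbeta β) (Icc (1 / 2) q) := by
  have hconc : ConcaveOn ℝ (Ico (1 / 2) 1) (fbetaDeriv β) :=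
    concaveOn_of_hasDerivAt_of_antitoneOn (convex_Ico _ _)
      (fun x hx ↦ hasDerivAt_fbetaDeriv (by linarith [hx.1]) hx.2)
      fbetaDeriv2_strictAntiOn.antitoneOn
  have hd : ∀ x ∈ Icc (1 / 2) q, HasDerivAt (fbeta β) (fbetaDeriv β x) x :=
    fun x hx ↦ hasDerivAt_fbeta (by linarith [hx.1]) (by linarith [hx.2])
  refine monotoneOn_of_hasDerivWithinAt_nonneg (convex_Icc _ _)
    (fun x hx ↦ (hd x hx).continuousAt.continuousWithinAt)
    (fun x hx ↦ (hd x (interior_subset hx)).hasDerivWithinAt) fun x hx ↦ ?_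
  have hx : x ∈ Icc (1 / 2) q := interior_subset hx
  have := hconc.min_le_of_mem_Icc ⟨le_rfl, by norm_num⟩ ⟨by linarith [hx.1, hx.2], hq⟩ hx
  rwa [fbetaDeriv_half, hq0, min_self] at this

lemma fbeta_le_of_le_abs_sub {δ₀ δ κ x : ℝ} (hq : q < 1) (hq0 : fbetaDeriv β q = 0)
    (hδ₀ : 1 / 2 < q - δ₀) (hκ : fbetaDeriv2 β (q - δ₀) ≤ -κ) (hκ0 : 0 ≤ κ) (hδ : 0 ≤ δ)
    (hδδ₀ : δ ≤ δ₀) (hx : x ∈ Ico (1 / 2) 1) (hfar : δ ≤ |x - q|) :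
    fbeta β x ≤ fbeta β q - κ / 2 * δ ^ 2 := by
  have hconc : ∀ y ∈ Ico (q - δ₀) 1, fbeta β y ≤ fbeta β q - κ / 2 * (y - q) ^ 2 := by
    intro y hy
    have := le_add_sq_of_deriv2_le (convex_Ico _ _) (c := -κ)
      (fun z hz ↦ hasDerivAt_fbeta (β := β) (by linarith [hz.1]) hz.2)
      (fun z hz ↦ hasDerivAt_fbetaDeriv (by linarith [hz.1]) hz.2)
      (fun z hz ↦ (fbetaDeriv2_strictAntiOn.antitoneOn ⟨hδ₀.le, by linarith⟩
        ⟨by linarith [hz.1], hz.2⟩ hz.1).trans hκ) ⟨by linarith, hq⟩ hy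
    rw [hq0] at this
    linarith
  rcases le_or_gt (q - δ₀) x with hx' | hx'
  · have hsq : δ ^ 2 ≤ (x - q) ^ 2 := by simpa only [sq_abs] using pow_le_pow_left₀ hδ hfar 2
    calc fbeta β x ≤ fbeta β q - κ / 2 * (x - q) ^ 2 := hconc x ⟨hx', hx.2⟩
      _ ≤ fbeta β q - κ / 2 * δ ^ 2 := by gcongr
  · have hsq : δ ^ 2 ≤ (q - δ₀ - q) ^ 2 := by
      rw [sub_sub_cancel_left, neg_sq]
      exact pow_le_pow_left₀ hδ hδδ₀ 2
    calc fbeta β x ≤ fbeta β (q - δ₀) :=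
          fbeta_monotoneOn hq hq0 ⟨hx.1, by linarith⟩ ⟨hδ₀.le, by linarith⟩ hx'.le
      _ ≤ fbeta β q - κ / 2 * (q - δ₀ - q) ^ 2 := hconc _ ⟨le_rfl, by linarith⟩
      _ ≤ fbeta β q - κ / 2 * δ ^ 2 := by gcongr

lemma le_fbeta_of_abs_sub_le {δ₀ K x : ℝ} (hq0 : fbetaDeriv β q = 0) (hδ₀ : 1 / 2 ≤ q - δ₀)
    (hδ₀' : q + δ₀ < 1) (hK : -K ≤ fbetaDeriv2 β (q + δ₀)) (hx : |x - q| ≤ δ₀) :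
    fbeta β q - K / 2 * (x - q) ^ 2 ≤ fbeta β x := by
  have hδ₀0 : 0 ≤ δ₀ := (abs_nonneg _).trans hx
  rw [abs_le] at hx
  have := add_sq_le_of_le_deriv2 (convex_Icc (q - δ₀) (q + δ₀)) (c := -K) (q := q) (x := x)
    (fun z hz ↦ hasDerivAt_fbeta (β := β) (by linarith [hz.1]) (by linarith [hz.2]))
    (fun z hz ↦ hasDerivAt_fbetaDeriv (by linarith [hz.1]) (by linarith [hz.2]))
    (fun z hz ↦ hK.trans (fbetaDeriv2_strictAntiOn.antitoneOn ⟨by linarith [hz.1], by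
      linarith [hz.2]⟩ ⟨by linarith, hδ₀'⟩ hz.2))
    ⟨by linarith, by linarith⟩ ⟨by linarith, by linarith⟩
  rw [hq0] at this
  linarith

lemma exists_window_fbetaDeriv2 (hq : q ∈ Ioo (1 / 2 : ℝ) 1) {ε : ℝ} (hε : 0 < ε) :
    ∃ δ₀ ∈ Ioo (0 : ℝ) (1 / 2), 1 / 2 < q - δ₀ ∧ q + δ₀ < 1 ∧
      fbetaDeriv2 β (q - δ₀) ≤ fbetaDeriv2 β q + ε ∧
      fbetaDeriv2 β q - ε ≤ fbetaDeriv2 β (q + δ₀) := by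
  obtain ⟨δ, hδ, hball⟩ := Metric.continuousAt_iff.1
    (continuousAt_fbetaDeriv2 (β := β) (by linarith [hq.1]) hq.2) ε hε
  set δ₀ := min (δ / 2) (min ((q - 1 / 2) / 2) ((1 - q) / 2))
  have h₁ : δ₀ ≤ δ / 2 := min_le_left _ _
  have h₂ : δ₀ ≤ (q - 1 / 2) / 2 := (min_le_right _ _).trans (min_le_left _ _)
  have h₃ : δ₀ ≤ (1 - q) / 2 := (min_le_right _ _).trans (min_le_right _ _)
  have hδ₀ : 0 < δ₀ := lt_min (by linarith) (lt_min (by linarith [hq.1]) (by linarith [hq.2]))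
  have hl := hball (x := q - δ₀)
    (by rw [Real.dist_eq, sub_sub_cancel_left, abs_neg, abs_of_pos hδ₀]; linarith)
  have hr := hball (x := q + δ₀)
    (by rw [Real.dist_eq, add_sub_cancel_left, abs_of_pos hδ₀]; linarith)
  rw [Real.dist_eq, abs_lt] at hl hr
  exact ⟨δ₀, ⟨hδ₀, by linarith [hq.1]⟩, by linarith, by linarith, by linarith, by linarith⟩

end fbeta

theorem stmt6_general (β : ℝ)
    (qp : ℝ) (hqp : qp ∈ Set.Ioo (1 / 2 : ℝ) 1)
    (hqp_eq : Real.log ((1 - qp) / qp) + 2 * β * (2 * qp - 1) = 0) :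
    ∃ C : ℝ, 0 < C ∧ ∃ δ₀ ∈ Set.Ioo (0 : ℝ) (1 / 2),
      ∀ δ : ℝ, 0 < δ → δ ≤ δ₀ →
        ∀ α ∈ Set.Ico (1 / 2 : ℝ) 1, ∀ α' ∈ Set.Ico (1 / 2 : ℝ) 1,
          δ ≤ |α' - qp| → |α - qp| ≤ δ / 2 →
          fbeta β α' - fbeta β α ≤ -C * δ ^ 2 := by
  have hq0 : fbetaDeriv β qp = 0 := by
    rwa [fbetaDeriv, ← Real.log_div (by linarith [hqp.2]) (by linarith [hqp.1])]
  set μ := -fbetaDeriv2 β qp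
  have hμ : 0 < μ := neg_pos.2 (fbetaDeriv2_neg_of_fbetaDeriv_eq_zero hqp hq0)
  obtain ⟨δ₀, hδ₀, hlo, hhi, hleft, hright⟩ :=
    exists_window_fbetaDeriv2 (β := β) hqp (half_pos hμ)
  refine ⟨μ / 16, by positivity, δ₀, hδ₀, fun δ hδ hδδ₀ α _ α' hα' hfar hnear ↦ ?_⟩
  have hα' := fbeta_le_of_le_abs_sub (κ := μ / 2) hqp.2 hq0 hlo (by linarith) (by linarith)
    hδ.le hδδ₀ hα' hfar
  have hα := le_fbeta_of_abs_sub_le (K := 3 * μ / 2) hq0 hlo.le hhi (by linarith)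
    (hnear.trans (by linarith))
  have hsq : (α - qp) ^ 2 ≤ (δ / 2) ^ 2 := by
    simpa only [sq_abs] using pow_le_pow_left₀ (abs_nonneg _) hnear 2
  nlinarith [mul_le_mul_of_nonneg_left hsq hμ.le]

/-- For `β ∈ (1,2]` and `q⁺ ∈ (1/2,1)` the zero of
`f_β'(α) = ln((1-α)/α) + 2β(2α-1)` in `(1/2,1)`, there exist `C > 0` and
`δ₀ ∈ (0,1/2)` depending only on `β` such that for all `δ ∈ (0,δ₀]` and
`α, α' ∈ [1/2,1)` with `|α' - q⁺| ≥ δ` and `|α - q⁺| ≤ δ/2`,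
`f_β(α') - f_β(α) ≤ -C·δ²`. -/
theorem stmt6 (β : ℝ) (hβ : β ∈ Set.Ioc (1 : ℝ) 2)
    (qp : ℝ) (hqp : qp ∈ Set.Ioo (1 / 2 : ℝ) 1)
    (hqp_eq : Real.log ((1 - qp) / qp) + 2 * β * (2 * qp - 1) = 0) :
    ∃ C : ℝ, 0 < C ∧ ∃ δ₀ ∈ Set.Ioo (0 : ℝ) (1 / 2),
      ∀ δ : ℝ, 0 < δ → δ ≤ δ₀ →
        ∀ α ∈ Set.Ico (1 / 2 : ℝ) 1, ∀ α' ∈ Set.Ico (1 / 2 : ℝ) 1,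
          δ ≤ |α' - qp| → |α - qp| ≤ δ / 2 →
          fbeta β α' - fbeta β α ≤ -C * δ ^ 2 :=
  stmt6_general β qp hqp hqp_eq
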